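/- Fix c ∈ [−1,1] and ω ∈ ℝ. Then, as h → 0⁺, (Q̂₁(hω; h) + ω² − (4 + 13c)ω⁶h⁴/(2880(2 − c)))/h⁶ converges to −(4 + 38c + c²)ω⁸/(64512(2 − c)²). -/

import Mathlib

open Filter Topology

/-- `Ω(θ) = −cos(θ/2)(16 − (7 + cos θ)c)`. -/
noncomputable def Om (c θ : ℝ) : ℝ :=
  -Real.cos (θ/2) * (16 - (7 + Real.cos θ)*c)

/-- `Δ(θ) = √(Ω(θ)² + 4c² sin⁶(θ/2))`. -/
noncomputable def Del (c θ : ℝ) : ℝ :=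
  Real.sqrt ((Om c θ)^2 + 4*c^2*(Real.sin (θ/2))^6)

/-- The principal symbol `Q̂₁(θ; h)`. -/
noncomputable def Qhat1 (c h θ : ℝ) : ℝ :=
  (2/(3*h^2)) * (-(15 + Real.cos θ) + (5 + 3*Real.cos θ)*c + Del c θ)

/-- The spurious symbol `Q̂₂(θ; h)`. -/
noncomputable def Qhat2 (c h θ : ℝ) : ℝ :=
  (2/(3*h^2)) * (-(15 + Real.cos θ) + (5 + 3*Real.cos θ)*c - Del c θ)

/-!
Write `Q̂₁(θ; h) = (2/(3h²)) N(θ)`. In the variable `u = sin²(θ/2) = (1 - cos θ)/2` the radicand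
of `Δ` is the quadratic `64(2-c)² + 32(2-c)(3c-4)u + 4c(9c-16)u²` (the `u³` terms cancel), so
`N` is a polynomial in `cos θ` plus the square root of one. Replacing `cos θ` by its Taylor
polynomial of degree 8 costs `O(θ¹⁰)`, since the tail of the cosine series is at most
`|θ|¹⁰ cosh θ`. The square root is expanded by exhibiting an explicit polynomial `D` with
`D(0) = 8(2-c) > 0` and `radicand - D² = O(θ¹⁰)`; then `√radicand - D = O(θ¹⁰)` because
`|√a - D| · D ≤ |a - D²|`. Hence `N(θ) = -(3/2)θ² + a₆θ⁶ + a₈θ⁸ + O(θ¹⁰)`, and at `θ = hω` the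
error, multiplied by `2/(3h²)` and divided by `h⁶`, is `O(h²)`.
-/

open Asymptotics
open scoped Nat

namespace Real

noncomputable def cosTaylor (n : ℕ) (x : ℝ) : ℝ :=
  ∑ k ∈ Finset.range n, (-1) ^ k * x ^ (2 * k) / (2 * k)!

theorem abs_cos_sub_cosTaylor_le (n : ℕ) (x : ℝ) :
    |cos x - cosTaylor n x| ≤ |x| ^ (2 * n) * cosh x := by
  have htail := (hasSum_nat_add_iff' n).mpr (hasSum_cos x)
  have hcosh := (hasSum_cosh x).mul_left (|x| ^ (2 * n))
  refine htail.norm_le_of_bounded hcosh fun k => ?_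
  have hfact : ((2 * k)! : ℝ) ≤ (2 * (k + n))! := by
    exact_mod_cast Nat.factorial_le (by omega)
  rw [norm_div, norm_mul, norm_pow, norm_neg, norm_one, one_pow, one_mul, norm_pow,
    Real.norm_eq_abs, RCLike.norm_natCast, ← (even_two_mul k).pow_abs, ← mul_div_assoc,
    ← pow_add, show 2 * n + 2 * k = 2 * (k + n) by ring]
  exact div_le_div_of_nonneg_left (by positivity) (by positivity) hfact

theorem cos_sub_cosTaylor_isBigO (n : ℕ) :
    (fun x => cos x - cosTaylor n x) =O[𝓝 0] (fun x => x ^ (2 * n)) := by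
  have hcosh : (fun x => x ^ (2 * n) * cosh x) =O[𝓝 0] (fun x => x ^ (2 * n)) := by
    simpa using (isBigO_refl (fun x : ℝ => x ^ (2 * n)) (𝓝 0)).mul
      ((continuous_cosh.tendsto 0).isBigO_one (F := ℝ))
  refine (isBigO_of_le _ fun x => ?_).trans hcosh
  simpa [abs_mul, abs_of_pos (cosh_pos x)] using abs_cos_sub_cosTaylor_le n x

theorem cosTaylor_five (x : ℝ) :
    cosTaylor 5 x = 1 - x ^ 2 / 2 + x ^ 4 / 24 - x ^ 6 / 720 + x ^ 8 / 40320 := by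
  simp [cosTaylor, Finset.sum_range_succ, Nat.factorial]
  ring

theorem abs_sqrt_sub_mul_le (a : ℝ) {b : ℝ} (hb : 0 ≤ b) : |√a - b| * b ≤ |a - b ^ 2| := by
  rcases le_or_gt 0 a with ha | ha
  · have hs := sq_sqrt ha
    have hfactor : |√a - b| * (√a + b) = |a - b ^ 2| := by
      rw [← abs_of_nonneg (add_nonneg (sqrt_nonneg a) hb), ← abs_mul]
      congr 1
      nlinarith
    rw [← hfactor]
    exact mul_le_mul_of_nonneg_left (by linarith [sqrt_nonneg a]) (abs_nonneg _)
  · rw [sqrt_eq_zero_of_nonpos ha.le, zero_sub, abs_neg, abs_of_nonneg hb,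
      abs_of_neg (by nlinarith)]
    nlinarith

end Real

theorem Asymptotics.IsBigO.sqrt_sub {α : Type*} {l : Filter α} {f g k : α → ℝ} {b : ℝ}
    (hb : 0 < b) (hg : Tendsto g l (𝓝 b)) (h : (fun x => f x - g x ^ 2) =O[l] k) :
    (fun x => √(f x) - g x) =O[l] k := by
  refine IsBigO.trans (IsBigO.of_bound (2 / b) ?_) h
  filter_upwards [hg.eventually (lt_mem_nhds (half_lt_self hb))] with x hx
  have hsqrt := Real.abs_sqrt_sub_mul_le (f x) (by linarith : 0 ≤ g x)
  rw [Real.norm_eq_abs, Real.norm_eq_abs, div_mul_eq_mul_div, le_div_iff₀ hb]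
  nlinarith [abs_nonneg (√(f x) - g x)]

theorem Asymptotics.IsBigO.tendsto_div_pow {f : ℝ → ℝ} {m n : ℕ} (hmn : m < n)
    (hf : f =O[𝓝 0] (· ^ n)) : Tendsto (fun x => f x / x ^ m) (𝓝[≠] 0) (𝓝 0) := by
  have hdiv : (fun x => f x / x ^ m) =O[𝓝[≠] 0] (fun x : ℝ => x ^ n / x ^ m) :=
    (hf.mono nhdsWithin_le_nhds).mul (isBigO_refl (fun x : ℝ => (x ^ m)⁻¹) _)
  refine hdiv.trans_tendsto (Tendsto.congr' ?_ (tendsto_nhdsWithin_of_tendsto_nhds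
    ((continuous_pow (n - m)).tendsto' 0 0 (zero_pow (by omega)))))
  filter_upwards [self_mem_nhdsWithin] with x hx
  exact (pow_sub₀ x hx hmn.le).trans (div_eq_mul_inv _ _)

namespace Qhat1

open Real

variable (c : ℝ)

noncomputable def radicand (u : ℝ) : ℝ :=
  64 * (2 - c) ^ 2 + 32 * (2 - c) * (3 * c - 4) * u + 4 * c * (9 * c - 16) * u ^ 2

theorem del_eq_sqrt_radicand (θ : ℝ) : Del c θ = √(radicand c ((1 - cos θ) / 2)) := by
  have hcos : cos (θ / 2) ^ 2 = (1 + cos θ) / 2 := by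
    rw [cos_sq, show 2 * (θ / 2) = θ by ring]
    ring
  have hsin : sin (θ / 2) ^ 2 = (1 - cos θ) / 2 := by
    rw [sin_sq, hcos]
    ring
  rw [Del, Om, show sin (θ / 2) ^ 6 = (sin (θ / 2) ^ 2) ^ 3 by ring, hsin, mul_pow, neg_sq, hcos,
    radicand]
  ring_nf

theorem radicand_sub_radicand (u v : ℝ) :
    radicand c u - radicand c v =
      (u - v) * (32 * (2 - c) * (3 * c - 4) + 4 * c * (9 * c - 16) * (u + v)) := by
  rw [radicand, radicand]
  ring

noncomputable def num (θ : ℝ) : ℝ :=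
  -(15 + cos θ) + (5 + 3 * cos θ) * c + Del c θ

noncomputable def numTaylor (θ : ℝ) : ℝ :=
  -(3 / 2) * θ ^ 2 + (4 + 13 * c) / (1920 * (2 - c)) * θ ^ 6
    - (4 + 38 * c + c ^ 2) / (43008 * (2 - c) ^ 2) * θ ^ 8

/-- Read off from `numTaylor`, so that `num - numTaylor` is
`(3c - 1)(cos - cosTaylor 5) + (Del - delTaylor)`. -/
noncomputable def delTaylor (θ : ℝ) : ℝ :=
  numTaylor c θ + 15 + cosTaylor 5 θ - (5 + 3 * cosTaylor 5 θ) * c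

/-- Obtained by dividing `radicand c ((1 - cosTaylor 5 θ) / 2) - delTaylor c θ ^ 2` by `θ ^ 10`. -/
noncomputable def delTaylorDefect (θ : ℝ) : ℝ :=
  (272 + 1356 * c + 2850 * c ^ 2 - 853 * c ^ 3) / (1935360 * (2 - c) ^ 2)
    - (232 + 28932 * c + 51849 * c ^ 2 - 2474 * c ^ 3) / (232243200 * (2 - c) ^ 2) * θ ^ 2
    + (16 + 12700 * c + 45546 * c ^ 2 - 12239 * c ^ 3 + 232 * c ^ 4)
      / (1857945600 * (2 - c) ^ 3) * θ ^ 4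
    - (16 + 58928 * c + 515884 * c ^ 2 - 147188 * c ^ 3 + 28481 * c ^ 4 + 4000 * c ^ 5)
      / (416179814400 * (2 - c) ^ 4) * θ ^ 6

variable {c}

theorem radicand_cosTaylor_sub_delTaylor_sq (hc : c ≠ 2) (θ : ℝ) :
    radicand c ((1 - cosTaylor 5 θ) / 2) - delTaylor c θ ^ 2 = θ ^ 10 * delTaylorDefect c θ := by
  have : 2 - c ≠ 0 := sub_ne_zero.mpr hc.symm
  rw [delTaylor, numTaylor, delTaylorDefect, radicand, cosTaylor_five]
  field_simp
  ring

theorem tendsto_delTaylor : Tendsto (delTaylor c) (𝓝 0) (𝓝 (8 * (2 - c))) := by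
  have hcont : Continuous (delTaylor c) := by
    unfold delTaylor numTaylor
    simp only [cosTaylor_five]
    fun_prop
  convert hcont.tendsto 0 using 2
  simp [delTaylor, numTaylor, cosTaylor_five]
  ring

theorem radicand_sub_delTaylor_sq_isBigO (hc : c ≠ 2) :
    (fun θ => radicand c ((1 - cos θ) / 2) - delTaylor c θ ^ 2) =O[𝓝 0] (· ^ 10) := by
  have hsplit : ∀ θ, radicand c ((1 - cos θ) / 2) - delTaylor c θ ^ 2 =
      (radicand c ((1 - cos θ) / 2) - radicand c ((1 - cosTaylor 5 θ) / 2))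
        + θ ^ 10 * delTaylorDefect c θ := by
    intro θ
    rw [← radicand_cosTaylor_sub_delTaylor_sq hc]
    ring
  have hdiff : (fun θ => (1 - cos θ) / 2 - (1 - cosTaylor 5 θ) / 2) =O[𝓝 0] (· ^ 10) := by
    have : ∀ θ, (1 - cos θ) / 2 - (1 - cosTaylor 5 θ) / 2 = -(1 / 2) * (cos θ - cosTaylor 5 θ) :=
      fun θ => by ring
    simpa only [this] using (cos_sub_cosTaylor_isBigO 5).const_mul_left (-(1 / 2))
  have hslope : Continuous fun θ => 32 * (2 - c) * (3 * c - 4)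
      + 4 * c * (9 * c - 16) * ((1 - cos θ) / 2 + (1 - cosTaylor 5 θ) / 2) := by
    simp only [cosTaylor_five]
    fun_prop
  have hdefect : Continuous (delTaylorDefect c) := by
    unfold delTaylorDefect
    fun_prop
  simp only [hsplit, radicand_sub_radicand]
  refine IsBigO.add ?_ ?_
  · simpa using hdiff.mul ((hslope.tendsto 0).isBigO_one ℝ)
  · simpa using (isBigO_refl (· ^ 10) (𝓝 (0 : ℝ))).mul ((hdefect.tendsto 0).isBigO_one ℝ)

theorem del_sub_delTaylor_isBigO (hc : c < 2) :
    (fun θ => Del c θ - delTaylor c θ) =O[𝓝 0] (· ^ 10) := by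
  simp only [del_eq_sqrt_radicand]
  exact (radicand_sub_delTaylor_sq_isBigO hc.ne).sqrt_sub (by linarith) tendsto_delTaylor

theorem num_sub_numTaylor_isBigO (hc : c < 2) :
    (fun θ => num c θ - numTaylor c θ) =O[𝓝 0] (· ^ 10) := by
  have hsplit : ∀ θ, num c θ - numTaylor c θ =
      (3 * c - 1) * (cos θ - cosTaylor 5 θ) + (Del c θ - delTaylor c θ) := by
    intro θ
    rw [num, delTaylor]
    ring
  simp only [hsplit]
  exact ((cos_sub_cosTaylor_isBigO 5).const_mul_left _).add (del_sub_delTaylor_isBigO hc)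

end Qhat1

/-- Sixth-order expansion of the principal symbol: as `h → 0⁺`,
`(Q̂₁(hω; h) + ω² − (4 + 13c)ω⁶h⁴/(2880(2 − c)))/h⁶ → −(4 + 38c + c²)ω⁸/(64512(2 − c)²)`. -/
theorem Qhat1_sixth_order (c : ℝ) (hc : c ∈ Set.Icc (-1 : ℝ) 1) (ω : ℝ) :
    Tendsto
      (fun h : ℝ =>
        (Qhat1 c h (h*ω) + ω^2 - (4 + 13*c)*ω^6*h^4/(2880*(2 - c)))/h^6)
      (𝓝[>] 0)
      (𝓝 (-(4 + 38*c + c^2)*ω^8/(64512*(2 - c)^2))) := by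
  have hc2 : c < 2 := by linarith [hc.2]
  set g := fun h : ℝ => Qhat1.num c (h * ω) - Qhat1.numTaylor c (h * ω)
  have hg : g =O[𝓝 0] (· ^ 10) := by
    have hscale : (fun h : ℝ => (h * ω) ^ 10) =O[𝓝 0] (· ^ 10) := by
      simpa only [mul_pow, mul_comm] using
        (isBigO_refl (· ^ 10) (𝓝 (0 : ℝ))).const_mul_left (ω ^ 10)
    refine ((Qhat1.num_sub_numTaylor_isBigO hc2).comp_tendsto ?_).trans hscale
    simpa using (continuous_mul_const ω).tendsto 0
  have hlim := (hg.tendsto_div_pow (m := 8) (by norm_num)).mono_left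
    (nhdsWithin_mono _ fun h (hh : 0 < h) => hh.ne')
  have hexpand : ∀ h : ℝ, h ≠ 0 →
      (Qhat1 c h (h*ω) + ω^2 - (4 + 13*c)*ω^6*h^4/(2880*(2 - c)))/h^6 =
        -(4 + 38*c + c^2)*ω^8/(64512*(2 - c)^2) + 2 / 3 * (g h / h ^ 8) := by
    intro h hh
    simp only [g, Qhat1, Qhat1.num, Qhat1.numTaylor]
    field_simp
    ring
  have hlim' := (hlim.const_mul (2 / 3)).const_add (-(4 + 38*c + c^2)*ω^8/(64512*(2 - c)^2))
  rw [mul_zero, add_zero] at hlim'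
  refine hlim'.congr' ?_
  filter_upwards [self_mem_nhdsWithin] with h (hh : 0 < h)
  exact (hexpand h hh.ne').symm
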